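/- Let X ≻ 0 be an n×n symmetric positive definite matrix, a ∈ ℝⁿ, ρ > 0, and B = a aᵀ − ρ I. Then min { Tr(XY) : Y ⪰ B, Y ⪰ 0 } = Tr(X^{1/2} B X^{1/2})₊, where Tr(M)₊ is the sum of positive eigenvalues of M. -/

import Mathlib

/-- The PSD square root, as defined in the older Mathlib (removed since). -/
noncomputable def Matrix.PosSemidef.sqrt {n : Type*} [Fintype n] [DecidableEq n]
    {A : Matrix n n ℝ} (hA : A.PosSemidef) : Matrix n n ℝ :=
  hA.1.eigenvectorUnitary.1 * Matrix.diagonal ((↑) ∘ (√·) ∘ hA.1.eigenvalues) *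
    (star hA.1.eigenvectorUnitary : Matrix n n ℝ)

open Matrix

lemma psd_diag_nonneg {n : ℕ} {W : Matrix (Fin n) (Fin n) ℝ} (hW : W.PosSemidef)
    (i : Fin n) : 0 ≤ W i i := by
  exact hW.diag_nonneg

theorem stmt_17 (n : ℕ) (X : Matrix (Fin n) (Fin n) ℝ) (hX : X.PosDef)
    (a : Fin n → ℝ) (ρ : ℝ) (hρ : 0 < ρ)
    (hB : (hX.posSemidef.sqrt * (Matrix.vecMulVec a a - ρ • 1) * hX.posSemidef.sqrt).IsHermitian) :
    sInf {t : ℝ | ∃ Y : Matrix (Fin n) (Fin n) ℝ,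
        (Y - (Matrix.vecMulVec a a - ρ • 1)).PosSemidef ∧ Y.PosSemidef ∧ t = (X * Y).trace} =
      ∑ i, max (hB.eigenvalues i) 0 := by
  set S := hX.posSemidef.sqrt with hSdef
  set B := Matrix.vecMulVec a a - ρ • 1 with hBdef
  set M := S * B * S with hMdef
  have hSsym : S.IsHermitian := by
    rw [hSdef, Matrix.PosSemidef.sqrt, Matrix.star_eq_conjTranspose]
    exact isHermitian_mul_mul_conjTranspose _ (Matrix.isHermitian_diagonal _)
  have hSS : S * S = X := by
    conv_rhs => rw [hX.posSemidef.1.spectral_theorem, Unitary.conjStarAlgAut_apply]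
    rw [hSdef, Matrix.PosSemidef.sqrt]
    simp only [Matrix.mul_assoc, Unitary.coe_star]
    rw [← Matrix.mul_assoc (star _ : Matrix (Fin n) (Fin n) ℝ) _,
      Unitary.star_mul_self_of_mem (Subtype.property _),
      Matrix.one_mul, ← Matrix.mul_assoc (diagonal _) (diagonal _), diagonal_mul_diagonal]
    congr 3
    funext i
    simp [Real.mul_self_sqrt (hX.posSemidef.eigenvalues_nonneg i)]
  set lam := hB.eigenvalues with hlamdef
  set U : Matrix (Fin n) (Fin n) ℝ := (hB.eigenvectorUnitary : Matrix (Fin n) (Fin n) ℝ)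
    with hUdef
  have hU1 : Uᴴ * U = 1 := by
    rw [← Matrix.star_eq_conjTranspose]
    exact Unitary.coe_star_mul_self _
  have hU2 : U * Uᴴ = 1 := by
    rw [← Matrix.star_eq_conjTranspose]
    exact Unitary.coe_mul_star_self _
  have hdiagM : Uᴴ * M * U = Matrix.diagonal lam := by
    have := hB.conjStarAlgAut_star_eigenvectorUnitary
    simpa [Matrix.star_eq_conjTranspose, Matrix.mul_assoc] using this
  have hMspec : M = U * Matrix.diagonal lam * Uᴴ := by
    have h : U * (Uᴴ * M * U) * Uᴴ = M := by
      calc U * (Uᴴ * M * U) * Uᴴ = (U * Uᴴ) * M * (U * Uᴴ) := by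
            simp only [Matrix.mul_assoc]
          _ = M := by rw [hU2, Matrix.one_mul, Matrix.mul_one]
    conv_lhs => rw [← h]
    rw [hdiagM]
  -- invertibility of S
  have hdetS : IsUnit S.det := by
    have hdX : 0 < X.det := hX.det_pos
    have : S.det * S.det = X.det := by rw [← Matrix.det_mul, hSS]
    have hne : S.det ≠ 0 := by
      intro h; rw [h, mul_zero] at this; exact hdX.ne' this.symm
    exact hne.isUnit
  have hSinv : S * S⁻¹ = 1 := Matrix.mul_nonsing_inv _ hdetS
  have hSinv' : S⁻¹ * S = 1 := Matrix.nonsing_inv_mul _ hdetS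
  have hSinvH : (S⁻¹).IsHermitian := by
    unfold Matrix.IsHermitian
    rw [Matrix.conjTranspose_nonsing_inv, hSsym.eq]
  -- positive part
  set P : Matrix (Fin n) (Fin n) ℝ :=
    U * Matrix.diagonal (fun i => max (lam i) 0) * Uᴴ with hPdef
  have hPpsd : P.PosSemidef :=
    (Matrix.PosSemidef.diagonal (fun i => le_max_right _ _)).mul_mul_conjTranspose_same U
  have htraceP : P.trace = ∑ i, max (lam i) 0 := by
    rw [hPdef, Matrix.trace_mul_comm, ← Matrix.mul_assoc, hU1, Matrix.one_mul,
      Matrix.trace_diagonal]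
  -- the witness
  set Y₀ : Matrix (Fin n) (Fin n) ℝ := S⁻¹ * P * S⁻¹ with hY₀def
  have hY₀psd : Y₀.PosSemidef := by
    have := hPpsd.mul_mul_conjTranspose_same S⁻¹
    rwa [hSinvH.eq] at this
  have hBinv : S⁻¹ * M * S⁻¹ = B := by
    rw [hMdef]
    calc S⁻¹ * (S * B * S) * S⁻¹ = (S⁻¹ * S) * B * (S * S⁻¹) := by
          simp only [Matrix.mul_assoc]
        _ = B := by rw [hSinv', hSinv, Matrix.one_mul, Matrix.mul_one]
  have hY₀feas : (Y₀ - B).PosSemidef := by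
    have hPMpsd : (P - M).PosSemidef := by
      have hPM : P - M = U * (Matrix.diagonal (fun i => max (lam i) 0 - lam i)) * Uᴴ := by
        rw [hPdef, hMspec, ← Matrix.diagonal_sub]
        noncomm_ring
      rw [hPM]
      exact (Matrix.PosSemidef.diagonal
        (fun i => sub_nonneg.mpr (le_max_left _ _))).mul_mul_conjTranspose_same U
    have : Y₀ - B = S⁻¹ * (P - M) * (S⁻¹)ᴴ := by
      rw [hSinvH.eq, hY₀def, ← hBinv]
      noncomm_ring
    rw [this]
    exact hPMpsd.mul_mul_conjTranspose_same _
  have htraceY₀ : (X * Y₀).trace = ∑ i, max (lam i) 0 := by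
    have h1 : X * Y₀ = S * P * S⁻¹ := by
      rw [hY₀def, ← hSS]
      calc S * S * (S⁻¹ * P * S⁻¹) = S * (S * S⁻¹) * P * S⁻¹ := by
            simp only [Matrix.mul_assoc]
          _ = S * P * S⁻¹ := by rw [hSinv, Matrix.mul_one]
    rw [h1, Matrix.trace_mul_comm, ← Matrix.mul_assoc, hSinv', Matrix.one_mul, htraceP]
  -- lower bound
  have hlb : ∀ t ∈ {t : ℝ | ∃ Y : Matrix (Fin n) (Fin n) ℝ,
      (Y - B).PosSemidef ∧ Y.PosSemidef ∧ t = (X * Y).trace},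
      (∑ i, max (lam i) 0) ≤ t := by
    rintro t ⟨Y, hY1, hY2, rfl⟩
    have hZpsd : (S * Y * S).PosSemidef := by
      have := hY2.mul_mul_conjTranspose_same S
      rwa [hSsym.eq] at this
    set W : Matrix (Fin n) (Fin n) ℝ := Uᴴ * (S * Y * S) * U with hWdef
    have hWpsd : W.PosSemidef := hZpsd.conjTranspose_mul_mul_same U
    have hWMD : (W - Matrix.diagonal lam).PosSemidef := by
      have hZM : S * Y * S - M = S * (Y - B) * S := by
        rw [hMdef]
        noncomm_ring
      have hpsd : (S * Y * S - M).PosSemidef := by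
        rw [hZM]
        have := hY1.mul_mul_conjTranspose_same S
        rwa [hSsym.eq] at this
      have : W - Matrix.diagonal lam = Uᴴ * (S * Y * S - M) * U := by
        rw [hWdef, ← hdiagM]
        noncomm_ring
      rw [this]
      exact hpsd.conjTranspose_mul_mul_same U
    have hdiag : ∀ i, max (lam i) 0 ≤ W i i := by
      intro i
      have h1 := psd_diag_nonneg hWpsd i
      have h2 := psd_diag_nonneg hWMD i
      simp only [Matrix.sub_apply, Matrix.diagonal_apply_eq, sub_nonneg] at h2
      exact max_le h2 h1
    have htr : (X * Y).trace = ∑ i, W i i := by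
      have h1 : W.trace = (S * Y * S).trace := by
        rw [hWdef, Matrix.trace_mul_comm, ← Matrix.mul_assoc, hU2, Matrix.one_mul]
      have h2 : (S * Y * S).trace = (X * Y).trace := by
        rw [Matrix.mul_assoc, Matrix.trace_mul_comm, Matrix.mul_assoc, hSS,
          Matrix.trace_mul_comm]
      rw [← h2, ← h1]
      rfl
    rw [htr]
    exact Finset.sum_le_sum fun i _ => hdiag i
  have hmem : (∑ i, max (lam i) 0) ∈ {t : ℝ | ∃ Y : Matrix (Fin n) (Fin n) ℝ,
      (Y - B).PosSemidef ∧ Y.PosSemidef ∧ t = (X * Y).trace} :=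
    ⟨Y₀, hY₀feas, hY₀psd, htraceY₀.symm⟩
  exact le_antisymm (csInf_le ⟨_, hlb⟩ hmem) (le_csInf ⟨_, hmem⟩ hlb)
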